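/- If Q₁ and Q₂ are quasi-nilpotent bounded operators on Hilbert spaces H and K respectively, commuting with A ∈ B(H) and B ∈ B(K) respectively, then (A+Q₁) ⊗ (B+Q₂) = A ⊗ B + Q where Q = Q₁ ⊗ B + A ⊗ Q₂ + Q₁ ⊗ Q₂ is quasi-nilpotent. -/

import Mathlib

/-!
By Gelfand's formula, `a` is quasinilpotent as soon as `‖a ^ n‖ ≤ c ^ n ‖b ^ n‖` for a
quasinilpotent `b`; this makes `x * y` quasinilpotent when `x` commutes with a quasinilpotent
`y`, and, through `(T ⊗ S) ^ n = T ^ n ⊗ S ^ n`, makes `Q₁ ⊗ S` and `T ⊗ Q₂` quasinilpotent.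
A sum of commuting quasinilpotents is quasinilpotent, since
`z - (x + y) = (z - x) (1 - (z - x)⁻¹ y)` for `z ≠ 0`. Finally `Q = Q₁ ⊗ (B + Q₂) + A ⊗ Q₂`,
and the two summands commute because `Qᵢ` commutes with `A`, resp. `B`.
-/

open Filter Topology ENNReal

namespace spectrum

section NormedField

variable {𝕜 A : Type*} [NormedField 𝕜] [NormedRing A] [NormedAlgebra 𝕜 A]

lemma isUnit_algebraMap_sub_of_spectralRadius_eq_zero {a : A} (ha : spectralRadius 𝕜 a = 0)
    {z : 𝕜} (hz : z ≠ 0) : IsUnit (algebraMap 𝕜 A z - a) :=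
  mem_resolventSet_of_spectralRadius_lt (by simpa [ha, pos_iff_ne_zero] using hz)

lemma spectralRadius_eq_zero_of_subset_zero {a : A} (h : spectrum 𝕜 a ⊆ {0}) :
    spectralRadius 𝕜 a = 0 :=
  nonpos_iff_eq_zero.mp <| iSup₂_le fun k hk => by simp [Set.mem_singleton_iff.mp (h hk)]

end NormedField

variable {A B : Type*} [NormedRing A] [NormedAlgebra ℂ A] [CompleteSpace A]
  [NormedRing B] [NormedAlgebra ℂ B] [CompleteSpace B]

lemma spectralRadius_eq_zero_of_nnnorm_pow_le {a : A} {b : B} (c : NNReal)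
    (hab : ∀ n, 0 < n → ‖a ^ n‖₊ ≤ c ^ n * ‖b ^ n‖₊) (hb : spectralRadius ℂ b = 0) :
    spectralRadius ℂ a = 0 := by
  have hlim : Tendsto (fun n : ℕ => (c : ℝ≥0∞) * (‖b ^ n‖₊ : ℝ≥0∞) ^ (1 / n : ℝ)) atTop (𝓝 0) := by
    simpa [hb] using ENNReal.Tendsto.const_mul
      (pow_nnnorm_pow_one_div_tendsto_nhds_spectralRadius b) (Or.inr coe_ne_top)
  have hle : ∀ᶠ n : ℕ in atTop,
      (‖a ^ n‖₊ : ℝ≥0∞) ^ (1 / n : ℝ) ≤ c * (‖b ^ n‖₊ : ℝ≥0∞) ^ (1 / n : ℝ) := by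
    filter_upwards [eventually_gt_atTop 0] with n hn
    calc (‖a ^ n‖₊ : ℝ≥0∞) ^ (1 / n : ℝ)
        ≤ ((c : ℝ≥0∞) ^ n * ‖b ^ n‖₊) ^ (1 / n : ℝ) := by
          gcongr
          exact_mod_cast hab n hn
      _ = c * (‖b ^ n‖₊ : ℝ≥0∞) ^ (1 / n : ℝ) := by
          rw [mul_rpow_of_nonneg _ _ (by positivity), one_div,
            pow_rpow_inv_natCast hn.ne']
  refine le_antisymm ?_ zero_le
  calc spectralRadius ℂ a
      ≤ atTop.liminf fun n : ℕ => (‖a ^ n‖₊ : ℝ≥0∞) ^ (1 / n : ℝ) :=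
        spectralRadius_le_liminf_pow_nnnorm_pow_one_div ℂ a
    _ ≤ 0 := (liminf_le_liminf hle).trans hlim.liminf_eq.le

lemma spectralRadius_mul_eq_zero_of_commute {x y : A} (hxy : Commute x y)
    (hy : spectralRadius ℂ y = 0) : spectralRadius ℂ (x * y) = 0 :=
  spectralRadius_eq_zero_of_nnnorm_pow_le ‖x‖₊ (fun n hn => by
    rw [hxy.mul_pow]
    exact (nnnorm_mul_le _ _).trans (by gcongr; exact nnnorm_pow_le' x hn)) hy

lemma spectralRadius_add_eq_zero_of_commute {x y : A} (hxy : Commute x y)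
    (hx : spectralRadius ℂ x = 0) (hy : spectralRadius ℂ y = 0) :
    spectralRadius ℂ (x + y) = 0 := by
  refine spectralRadius_eq_zero_of_subset_zero fun z hz => ?_
  by_contra hz0
  obtain ⟨u, hu⟩ := isUnit_algebraMap_sub_of_spectralRadius_eq_zero hx hz0
  have huy : Commute (↑u⁻¹ : A) y := by
    refine Commute.units_inv_left ?_
    rw [hu]
    exact (Algebra.commute_algebraMap_left z y).sub_left hxy
  have hfactor : algebraMap ℂ A z - (x + y) = u * (algebraMap ℂ A 1 - ↑u⁻¹ * y) := by
    rw [map_one, mul_sub, mul_one, Units.mul_inv_cancel_left, hu]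
    abel
  refine hz (?_ : IsUnit _)
  rw [hfactor]
  exact u.isUnit.mul (isUnit_algebraMap_sub_of_spectralRadius_eq_zero
    (spectralRadius_mul_eq_zero_of_commute huy hy) one_ne_zero)

end spectrum

section Pairing

variable {M N P : Type*} [Monoid M] [Monoid N] [Monoid P]

lemma pow_apply_of_map_mul_mul (f : M → N → P)
    (hf : ∀ a a' b b', f (a * a') (b * b') = f a b * f a' b') (a : M) (b : N) {n : ℕ}
    (hn : 0 < n) : f a b ^ n = f (a ^ n) (b ^ n) := by
  induction n, hn using Nat.le_induction with
  | base => simp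
  | succ n _ ih => rw [pow_succ, ih, ← hf, ← pow_succ, ← pow_succ]

variable {A B C : Type*} [NormedRing A] [NormedRing B] [NormedRing C]
  [NormedAlgebra ℂ C] [CompleteSpace C]

lemma spectralRadius_apply_eq_zero_of_left [NormedAlgebra ℂ A] [CompleteSpace A] (f : A → B → C)
    (hf : ∀ a a' b b', f (a * a') (b * b') = f a b * f a' b')
    (hf_norm : ∀ a b, ‖f a b‖ ≤ ‖a‖ * ‖b‖) {a : A} (ha : spectralRadius ℂ a = 0) (b : B) :
    spectralRadius ℂ (f a b) = 0 :=
  spectrum.spectralRadius_eq_zero_of_nnnorm_pow_le ‖b‖₊ (fun n hn => by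
    rw [pow_apply_of_map_mul_mul f hf a b hn, mul_comm]
    calc ‖f (a ^ n) (b ^ n)‖₊ ≤ ‖a ^ n‖₊ * ‖b ^ n‖₊ := hf_norm _ _
      _ ≤ ‖a ^ n‖₊ * ‖b‖₊ ^ n := by gcongr; exact nnnorm_pow_le' b hn) ha

lemma spectralRadius_apply_eq_zero_of_right [NormedAlgebra ℂ B] [CompleteSpace B] (f : A → B → C)
    (hf : ∀ a a' b b', f (a * a') (b * b') = f a b * f a' b')
    (hf_norm : ∀ a b, ‖f a b‖ ≤ ‖a‖ * ‖b‖) (a : A) {b : B} (hb : spectralRadius ℂ b = 0) :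
    spectralRadius ℂ (f a b) = 0 :=
  spectrum.spectralRadius_eq_zero_of_nnnorm_pow_le ‖a‖₊ (fun n hn => by
    rw [pow_apply_of_map_mul_mul f hf a b hn]
    calc ‖f (a ^ n) (b ^ n)‖₊ ≤ ‖a ^ n‖₊ * ‖b ^ n‖₊ := hf_norm _ _
      _ ≤ ‖a‖₊ ^ n * ‖b ^ n‖₊ := by gcongr; exact nnnorm_pow_le' a hn) hb

end Pairing

theorem tensor_perturbation_quasinilpotent_general
    {H K HK : Type*}
    [NormedAddCommGroup H] [InnerProductSpace ℂ H] [CompleteSpace H]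
    [NormedAddCommGroup K] [InnerProductSpace ℂ K] [CompleteSpace K]
    [NormedAddCommGroup HK] [InnerProductSpace ℂ HK] [CompleteSpace HK]
    (otimes : (H →L[ℂ] H) →ₗ[ℂ] (K →L[ℂ] K) →ₗ[ℂ] (HK →L[ℂ] HK))
    (h_mul : ∀ (T T' : H →L[ℂ] H) (S S' : K →L[ℂ] K),
      otimes (T * T') (S * S') = otimes T S * otimes T' S')
    (h_norm : ∀ (T : H →L[ℂ] H) (S : K →L[ℂ] K), ‖otimes T S‖ ≤ ‖T‖ * ‖S‖)
    (A Q₁ : H →L[ℂ] H) (B Q₂ : K →L[ℂ] K)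
    (hQ₁ : spectralRadius ℂ Q₁ = 0) (hQ₂ : spectralRadius ℂ Q₂ = 0)
    (hc₁ : Q₁ * A = A * Q₁) (hc₂ : Q₂ * B = B * Q₂) :
    otimes (A + Q₁) (B + Q₂)
      = otimes A B + (otimes Q₁ B + otimes A Q₂ + otimes Q₁ Q₂) ∧
    spectralRadius ℂ (otimes Q₁ B + otimes A Q₂ + otimes Q₁ Q₂) = 0 := by
  refine ⟨by simp only [map_add, LinearMap.add_apply]; abel, ?_⟩
  have hsplit : otimes Q₁ B + otimes A Q₂ + otimes Q₁ Q₂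
      = otimes Q₁ (B + Q₂) + otimes A Q₂ := by
    rw [map_add]
    abel
  have hcomm : Commute (otimes Q₁ (B + Q₂)) (otimes A Q₂) := by
    rw [Commute, SemiconjBy, ← h_mul, ← h_mul, hc₁, add_mul, mul_add, hc₂]
  rw [hsplit]
  exact spectrum.spectralRadius_add_eq_zero_of_commute hcomm
    (spectralRadius_apply_eq_zero_of_left (otimes · ·) h_mul h_norm hQ₁ _)
    (spectralRadius_apply_eq_zero_of_right (otimes · ·) h_mul h_norm _ hQ₂)

/-- If Q₁, Q₂ are quasi-nilpotent operators commuting with A, B respectively,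
then (A+Q₁) ⊗ (B+Q₂) = A ⊗ B + Q where Q = Q₁⊗B + A⊗Q₂ + Q₁⊗Q₂ is
quasi-nilpotent.  The Hilbert-space tensor product of operators is axiomatized
by a bilinear map `otimes` which is multiplicative, submultiplicative in norm,
and compatible with elementary tensors `tmul`. -/
theorem tensor_perturbation_quasinilpotent
    {H K HK : Type*}
    [NormedAddCommGroup H] [InnerProductSpace ℂ H] [CompleteSpace H]
    [NormedAddCommGroup K] [InnerProductSpace ℂ K] [CompleteSpace K]
    [NormedAddCommGroup HK] [InnerProductSpace ℂ HK] [CompleteSpace HK]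
    (tmul : H →ₗ[ℂ] K →ₗ[ℂ] HK)
    (otimes : (H →L[ℂ] H) →ₗ[ℂ] (K →L[ℂ] K) →ₗ[ℂ] (HK →L[ℂ] HK))
    (h_apply : ∀ (T : H →L[ℂ] H) (S : K →L[ℂ] K) (x : H) (y : K),
      (otimes T S) (tmul x y) = tmul (T x) (S y))
    (h_mul : ∀ (T T' : H →L[ℂ] H) (S S' : K →L[ℂ] K),
      otimes (T * T') (S * S') = otimes T S * otimes T' S')
    (h_norm : ∀ (T : H →L[ℂ] H) (S : K →L[ℂ] K), ‖otimes T S‖ ≤ ‖T‖ * ‖S‖)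
    (A Q₁ : H →L[ℂ] H) (B Q₂ : K →L[ℂ] K)
    (hQ₁ : spectralRadius ℂ Q₁ = 0) (hQ₂ : spectralRadius ℂ Q₂ = 0)
    (hc₁ : Q₁ * A = A * Q₁) (hc₂ : Q₂ * B = B * Q₂) :
    otimes (A + Q₁) (B + Q₂)
      = otimes A B + (otimes Q₁ B + otimes A Q₂ + otimes Q₁ Q₂) ∧
    spectralRadius ℂ (otimes Q₁ B + otimes A Q₂ + otimes Q₁ Q₂) = 0 :=
  tensor_perturbation_quasinilpotent_general otimes h_mul h_norm A Q₁ B Q₂ hQ₁ hQ₂ hc₁ hc₂
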